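/- Completeness of NCSB-MaxRank: if an infinite word α is not accepted by a semi-deterministic Büchi automaton A, then NCSB-MaxRank(A) has an infinite run on α that visits macrostates with empty B-component infinitely often; hence α ∈ L(NCSB-MaxRank(A)). -/

import Mathlib

attribute [local instance] Classical.propDecidable

universe u v

variable {A : Type u} {Q : Type v}

/-- `π` is an (infinite) trace of the transition function `δ` over the word `w`. -/
def IsTrace (δ : Q → A → Set Q) (w : ℕ → A) (π : ℕ → Q) : Prop :=
  ∀ i, π (i + 1) ∈ δ (π i) (w i)

/-- co-Büchi acceptance: only finitely many visits to `F`. -/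
def FinAcc (F : Set Q) (π : ℕ → Q) : Prop := ∃ n, ∀ m ≥ n, π m ∉ F

/-- Büchi acceptance (state-based): infinitely many visits to `F`. -/
def InfAcc (F : Set Q) (π : ℕ → Q) : Prop := ∀ n, ∃ m ≥ n, π m ∈ F

/-- Büchi acceptance with accepting states `F` and accepting transitions `δF`. -/
def BuchiAccT (F : Set Q) (δF : Set (Q × A × Q)) (w : ℕ → A) (π : ℕ → Q) : Prop :=
  ∀ n, ∃ m ≥ n, π m ∈ F ∨ (π m, w m, π (m + 1)) ∈ δF

/-- Successors of a set of states. -/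
def stepSet (δ : Q → A → Set Q) (S : Set Q) (a : A) : Set Q := ⋃ p ∈ S, δ p a

/-- The subset-construction sequence `ρ^B_α`. -/
def subsetSeq (δ : Q → A → Set Q) (w : ℕ → A) (B : Set Q) : ℕ → Set Q
  | 0 => B
  | i + 1 => stepSet δ (subsetSeq δ w B i) (w i)

/-- `Π_ρ`: the traces over `w` matching the sequence of sets `ρ` componentwise. -/
def TraceSet (δ : Q → A → Set Q) (w : ℕ → A) (ρ : ℕ → Set Q) : Set (ℕ → Q) :=
  {π | IsTrace δ w π ∧ ∀ i, π i ∈ ρ i}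

/-- `Π_ρ` contains a (co-Büchi-)accepting trace. -/
def HasAccTrace (δ : Q → A → Set Q) (F : Set Q) (w : ℕ → A) (ρ : ℕ → Set Q) : Prop :=
  ∃ π ∈ TraceSet δ w ρ, FinAcc F π

/-- `Π_ρ^∪` (the union of the trace sets of all suffixes) contains an accepting trace. -/
def HasAccTraceU (δ : Q → A → Set Q) (F : Set Q) (w : ℕ → A) (ρ : ℕ → Set Q) : Prop :=
  ∃ i, HasAccTrace δ F (fun n => w (n + i)) (fun n => ρ (n + i))

/-- Reachability in the automaton. -/
def Reaches (δ : Q → A → Set Q) : Q → Q → Prop :=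
  Relation.ReflTransGen (fun p q => ∃ a, q ∈ δ p a)

/-- The maximal SCC containing `q`. -/
def scc (δ : Q → A → Set Q) (q : Q) : Set Q :=
  {p | Reaches δ p q ∧ Reaches δ q p}

/-- Weak automaton: states of the same SCC agree on acceptance. -/
def IsWeak (δ : Q → A → Set Q) (F : Set Q) : Prop :=
  ∀ p q, Reaches δ p q → Reaches δ q p → (p ∈ F ↔ q ∈ F)

/-- Fair simulation on the co-BA `(Q, δ, _, F, ∅)`. -/
def FairSim (δ : Q → A → Set Q) (F : Set Q) (p q : Q) : Prop :=
  ∀ (w : ℕ → A) (π : ℕ → Q), π 0 = p → IsTrace δ w π → FinAcc F π →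
    ∃ π', π' 0 = q ∧ IsTrace δ w π' ∧ FinAcc F π'

/-- `R` is a direct-simulation relation on the BA `(Q, δ, _, F, ∅)`. -/
def IsDirectSim (δ : Q → A → Set Q) (F : Set Q) (R : Q → Q → Prop) : Prop :=
  ∀ p q, R p q → (p ∈ F → q ∈ F) ∧ ∀ a, ∀ p' ∈ δ p a, ∃ q' ∈ δ q a, R p' q'

/-- `p` is directly simulated by `q`. -/
def DirectSim (δ : Q → A → Set Q) (F : Set Q) (p q : Q) : Prop :=
  ∃ R, IsDirectSim δ F R ∧ R p q

/-- The relation `⊑`: fair simulation refined by the reachability conditions. -/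
def SqSub (δ : Q → A → Set Q) (F : Set Q) (p q : Q) : Prop :=
  FairSim δ F p q ∧ Reaches δ p q ∧ (¬ Reaches δ q p ∨ p = q)

/-- One step of the Miyano–Hayashi-style construction with adjustment function `θ`. -/
noncomputable def mhStep (δ : Q → A → Set Q) (F : Set Q) (θ : Set Q → Set Q)
    (m : Set Q × Set Q) (a : A) : Set Q × Set Q :=
  let S' := θ (stepSet δ m.1 a)
  (S', if m.2 = ∅ then S' \ F else (stepSet δ m.2 a ∩ S') \ F)

/-- The (unique) run of the deterministic automaton `MiHay_θ(A_c)` on `w`. -/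
noncomputable def mhRun (δ : Q → A → Set Q) (F : Set Q) (θ : Set Q → Set Q)
    (I : Set Q) (w : ℕ → A) : ℕ → Set Q × Set Q
  | 0 => (θ I, θ I \ F)
  | i + 1 => mhStep δ F θ (mhRun δ F θ I w i) (w i)

/-- `MiHay_θ(A_c)` accepts `w`: the `B`-component is empty infinitely often. -/
def MhAccepts (δ : Q → A → Set Q) (F : Set Q) (θ : Set Q → Set Q)
    (I : Set Q) (w : ℕ → A) : Prop :=
  ∀ n, ∃ m ≥ n, (mhRun δ F θ I w m).2 = (∅ : Set Q)

/-- `w ∈ L(A_c)` for the co-BA `A_c = (Q, δ, I, F, ∅)`. -/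
def CoBuchiLang (δ : Q → A → Set Q) (I F : Set Q) (w : ℕ → A) : Prop :=
  ∃ π, π 0 ∈ I ∧ IsTrace δ w π ∧ FinAcc F π

/-- `w ∈ L(A)` for the BA `A = (Q, δ, I, F, δF)`. -/
def BuchiLang (δ : Q → A → Set Q) (I F : Set Q) (δF : Set (Q × A × Q)) (w : ℕ → A) : Prop :=
  ∃ π, π 0 ∈ I ∧ IsTrace δ w π ∧ BuchiAccT F δF w π

/-- Macrostates `(N, C, S, B)` of the NCSB-MaxRank construction. -/
abbrev Macro (Q : Type v) := Set Q × Set Q × Set Q × Set Q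

/-- The successor relation `δ'` of NCSB-MaxRank. -/
noncomputable def NcsbSucc (δ : Q → A → Set Q) (Q1 Q2 F : Set Q) (δF : Set (Q × A × Q))
    (m : Macro Q) (a : A) (m' : Macro Q) : Prop :=
  (¬ ∃ p ∈ m.2.2.1, ∃ q ∈ δ p a, (p, a, q) ∈ δF) ∧
  (let N' := stepSet δ m.1 a ∩ Q1
   let S' := stepSet δ m.2.2.1 a
   let C' := ((stepSet δ m.1 a ∩ Q2) ∪ stepSet δ m.2.1 a) \ S'
   let B' := if m.2.2.2 = ∅ then C' else stepSet δ m.2.2.2 a ∩ C'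
   m' = (N', C', S', B') ∨ (B' ∩ F = ∅ ∧ m' = (N', C' \ (S' ∪ B'), S' ∪ B', (∅ : Set Q))))

/-- Well-formed macrostates of NCSB-MaxRank. -/
def NcsbState (Q1 Q2 F : Set Q) (m : Macro Q) : Prop :=
  m.1 ⊆ Q1 ∧ m.2.1 ⊆ Q2 ∧ m.2.2.1 ⊆ Q2 \ F ∧ m.2.2.2 ⊆ m.2.1

/-- `R` is a run of `NCSB-MaxRank(A)` on `w`. -/
noncomputable def NcsbRun (δ : Q → A → Set Q) (Q1 Q2 I F : Set Q) (δF : Set (Q × A × Q))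
    (w : ℕ → A) (R : ℕ → Macro Q) : Prop :=
  R 0 = (Q1 ∩ I, Q2 ∩ I, (∅ : Set Q), Q2 ∩ I) ∧
  (∀ i, NcsbState Q1 Q2 F (R i)) ∧
  ∀ i, NcsbSucc δ Q1 Q2 F δF (R i) (w i) (R (i + 1))

/-- A run of `NCSB-MaxRank(A)` is accepting: `B = ∅` infinitely often. -/
def NcsbAcc (R : ℕ → Macro Q) : Prop := ∀ n, ∃ m ≥ n, (R m).2.2.2 = (∅ : Set Q)

/-! The witnessing run follows the deterministic successor `γ₁` and flushes `B` into `S`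
(successor `γ₂`) as soon as every state of the new `B` is *safe*: no state on its future
deterministic path is accepting or has an accepting transition. Safety propagates along
transitions, so `S` never blocks a transition of NCSB-MaxRank.

If `B` stayed nonempty from some time `n` on, then from `n` on it would only follow the
deterministic paths of the finitely many states of `B_n`. Each of these paths eventually stops
seeing accepting states and transitions: otherwise, prefixed by a path from `I` to its start, it
would be an accepting run of `A` on `α`. Hence all states of `B` eventually become safe, and the
run flushes `B` after all, a contradiction. -/

open Set Filter

section SubsetConstruction

variable {δ : Q → A → Set Q} {w : ℕ → A}

theorem mem_stepSet {S : Set Q} {a : A} {p : Q} : p ∈ stepSet δ S a ↔ ∃ q ∈ S, p ∈ δ q a := by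
  simp [stepSet]

theorem stepSet_mono {X Y : Set Q} (h : X ⊆ Y) (a : A) : stepSet δ X a ⊆ stepSet δ Y a :=
  biUnion_subset_biUnion_left h

theorem stepSet_subset_of_closed {Q2 S : Set Q} (hclosed : ∀ q ∈ Q2, ∀ a, δ q a ⊆ Q2)
    (hS : S ⊆ Q2) (a : A) : stepSet δ S a ⊆ Q2 :=
  iUnion₂_subset fun q hq => hclosed q (hS hq) a

theorem subsetSeq_succ (X : Set Q) (k : ℕ) :
    subsetSeq δ w X (k + 1) = stepSet δ (subsetSeq δ w X k) (w k) :=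
  rfl

theorem subsetSeq_mono {X Y : Set Q} (h : X ⊆ Y) : ∀ k, subsetSeq δ w X k ⊆ subsetSeq δ w Y k
  | 0 => h
  | k + 1 => stepSet_mono (subsetSeq_mono h k) _

theorem subsetSeq_shift_add (X : Set Q) (i k : ℕ) :
    ∀ k', subsetSeq δ (fun m => w (m + i)) X (k + k') =
      subsetSeq δ (fun m => w (m + (i + k))) (subsetSeq δ (fun m => w (m + i)) X k) k'
  | 0 => rfl
  | k' + 1 => by
    rw [← Nat.add_assoc, subsetSeq_succ, subsetSeq_succ, subsetSeq_shift_add X i k k']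
    congr 2
    omega

theorem subsetSeq_subset_of_closed {Q2 X : Set Q} (hclosed : ∀ q ∈ Q2, ∀ a, δ q a ⊆ Q2)
    (hX : X ⊆ Q2) : ∀ k, subsetSeq δ w X k ⊆ Q2
  | 0 => hX
  | k + 1 => stepSet_subset_of_closed hclosed (subsetSeq_subset_of_closed hclosed hX k) _

theorem mem_subsetSeq_iff {X : Set Q} {p : Q} :
    ∀ {k}, p ∈ subsetSeq δ w X k ↔ ∃ q ∈ X, p ∈ subsetSeq δ w {q} k
  | 0 => ⟨fun hp => ⟨p, hp, rfl⟩, by rintro ⟨q, hq, rfl⟩; exact hq⟩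
  | k + 1 => by
    refine ⟨fun hp => ?_, fun ⟨q, hq, hp⟩ => subsetSeq_mono (singleton_subset_iff.2 hq) _ hp⟩
    obtain ⟨r, hr, hpr⟩ := mem_stepSet.1 hp
    obtain ⟨q, hq, hrq⟩ := mem_subsetSeq_iff.1 hr
    exact ⟨q, hq, mem_stepSet.2 ⟨r, hrq, hpr⟩⟩

theorem subsetSeq_nonempty_antitone (X : Set Q) :
    Antitone fun k => (subsetSeq δ w X k).Nonempty :=
  antitone_nat_of_succ_le fun _ ⟨_, hp⟩ =>
    let ⟨q, hq, _⟩ := mem_stepSet.1 hp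
    ⟨q, hq⟩

theorem subsetSeq_singleton_subsingleton {Q2 : Set Q} (hclosed : ∀ q ∈ Q2, ∀ a, δ q a ⊆ Q2)
    (hdet : ∀ q ∈ Q2, ∀ a, (δ q a).Subsingleton) {q : Q} (hq : q ∈ Q2) :
    ∀ k, (subsetSeq δ w {q} k).Subsingleton
  | 0 => subsingleton_singleton
  | k + 1 => by
    intro x hx y hy
    obtain ⟨r, hr, hx⟩ := mem_stepSet.1 hx
    obtain ⟨r', hr', hy⟩ := mem_stepSet.1 hy
    obtain rfl := subsetSeq_singleton_subsingleton hclosed hdet hq k hr hr'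
    exact hdet r (subsetSeq_subset_of_closed hclosed (singleton_subset_iff.2 hq) k hr) _ hx hy

theorem exists_isTrace_of_subsetSeq_subsingleton {X : Set Q}
    (hsub : ∀ k, (subsetSeq δ w X k).Subsingleton) (hne : ∀ k, (subsetSeq δ w X k).Nonempty) :
    ∃ π, IsTrace δ w π ∧ ∀ k, subsetSeq δ w X k = {π k} := by
  choose π hπ using hne
  have heq : ∀ k, subsetSeq δ w X k = {π k} := fun k => (hsub k).eq_singleton_of_mem (hπ k)
  refine ⟨π, fun k => ?_, heq⟩
  obtain ⟨q, hq, hπq⟩ := mem_stepSet.1 (hπ (k + 1))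
  rw [heq k, mem_singleton_iff] at hq
  rwa [hq] at hπq

theorem exists_isTrace_of_mem_subsetSeq {I : Set Q} :
    ∀ {n} {π' : ℕ → Q}, π' 0 ∈ subsetSeq δ w I n → IsTrace δ (fun m => w (m + n)) π' →
      ∃ π, π 0 ∈ I ∧ IsTrace δ w π ∧ ∀ m, π (m + n) = π' m
  | 0, π', h0, hπ' => ⟨π', h0, hπ', fun _ => rfl⟩
  | n + 1, π', h0, hπ' => by
    obtain ⟨q, hq, hπ'q⟩ := mem_stepSet.1 h0
    let π'' : ℕ → Q := fun | 0 => q | m + 1 => π' m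
    have hπ'' : IsTrace δ (fun m => w (m + n)) π''
      | 0 => by simpa [π''] using hπ'q
      | m + 1 => by simpa [π'', Nat.add_right_comm m 1 n, Nat.add_assoc] using hπ' m
    obtain ⟨π, hπI, hπ, hππ''⟩ := exists_isTrace_of_mem_subsetSeq hq hπ''
    exact ⟨π, hπI, hπ, fun m => by rw [← Nat.add_assoc, Nat.add_right_comm, hππ'']⟩

theorem buchiAccT_of_shift {F : Set Q} {δF : Set (Q × A × Q)} {π : ℕ → Q} {n : ℕ}
    (h : BuchiAccT F δF (fun m => w (m + n)) fun m => π (m + n)) : BuchiAccT F δF w π := by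
  intro N
  obtain ⟨m, hm, hacc⟩ := h N
  refine ⟨m + n, by omega, ?_⟩
  beta_reduce at hacc
  rwa [Nat.add_right_comm m 1 n] at hacc

end SubsetConstruction

def CanAccept (δ : Q → A → Set Q) (F : Set Q) (δF : Set (Q × A × Q)) (a : A) (p : Q) : Prop :=
  p ∈ F ∨ ∃ r ∈ δ p a, (p, a, r) ∈ δF

def Safe (δ : Q → A → Set Q) (F : Set Q) (δF : Set (Q × A × Q)) (w : ℕ → A) (i : ℕ) (q : Q) :
    Prop :=
  ∀ k, ∀ p ∈ subsetSeq δ (fun m => w (m + i)) {q} k, ¬ CanAccept δ F δF (w (k + i)) p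

section Safety

variable {δ : Q → A → Set Q} {Q2 I F : Set Q} {δF : Set (Q × A × Q)} {w : ℕ → A}

theorem Safe.not_canAccept {i : ℕ} {q : Q} (h : Safe δ F δF w i q) :
    ¬ CanAccept δ F δF (w i) q := by
  simpa using h 0 q rfl

theorem Safe.notMem {i : ℕ} {q : Q} (h : Safe δ F δF w i q) : q ∉ F :=
  fun hq => h.not_canAccept (Or.inl hq)

theorem Safe.notMem_δF {i : ℕ} {q r : Q} (h : Safe δ F δF w i q) (hr : r ∈ δ q (w i)) :
    (q, w i, r) ∉ δF :=
  fun hqr => h.not_canAccept (Or.inr ⟨r, hr, hqr⟩)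

theorem Safe.step {i : ℕ} {q r : Q} (h : Safe δ F δF w i q) (hr : r ∈ δ q (w i)) :
    Safe δ F δF w (i + 1) r := by
  intro k p hp
  have hr' : {r} ⊆ subsetSeq δ (fun m => w (m + i)) {q} 1 :=
    singleton_subset_iff.2 (mem_stepSet.2 ⟨q, rfl, by simpa using hr⟩)
  have hp' : p ∈ subsetSeq δ (fun m => w (m + i)) {q} (1 + k) := by
    rw [subsetSeq_shift_add]
    exact subsetSeq_mono hr' k hp
  simpa only [show 1 + k + i = k + (i + 1) by omega] using h (1 + k) p hp'

theorem exists_buchiAccT_of_frequently_canAccept (hclosed : ∀ q ∈ Q2, ∀ a, δ q a ⊆ Q2)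
    (hdet : ∀ q ∈ Q2, ∀ a, (δ q a).Subsingleton) {q : Q} (hq : q ∈ Q2)
    (h : ∃ᶠ k in atTop, ∃ p ∈ subsetSeq δ w {q} k, CanAccept δ F δF (w k) p) :
    ∃ π, π 0 = q ∧ IsTrace δ w π ∧ BuchiAccT F δF w π := by
  have hne : ∀ k, (subsetSeq δ w {q} k).Nonempty := fun k =>
    let ⟨_, hkj, p, hp, _⟩ := frequently_atTop.1 h k
    subsetSeq_nonempty_antitone {q} hkj ⟨p, hp⟩
  obtain ⟨π, hπ, heq⟩ :=
    exists_isTrace_of_subsetSeq_subsingleton (subsetSeq_singleton_subsingleton hclosed hdet hq) hne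
  have hπQ2 : ∀ k, π k ∈ Q2 := fun k =>
    subsetSeq_subset_of_closed hclosed (singleton_subset_iff.2 hq) k
      (by rw [heq k]; exact mem_singleton _)
  refine ⟨π, (singleton_eq_singleton_iff.1 (heq 0)).symm, hπ, fun N => ?_⟩
  obtain ⟨k, hk, p, hp, hacc⟩ := frequently_atTop.1 h N
  rw [heq k, mem_singleton_iff] at hp
  subst hp
  refine ⟨k, hk, hacc.imp_right fun ⟨r, hr, hrF⟩ => ?_⟩
  rwa [hdet _ (hπQ2 k) _ (hπ k) hr]

theorem eventually_not_canAccept_of_mem_subsetSeq (hclosed : ∀ q ∈ Q2, ∀ a, δ q a ⊆ Q2)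
    (hdet : ∀ q ∈ Q2, ∀ a, (δ q a).Subsingleton) (hw : ¬ BuchiLang δ I F δF w) {n : ℕ} {q : Q}
    (hq : q ∈ Q2) (hqI : q ∈ subsetSeq δ w I n) :
    ∀ᶠ k in atTop, ∀ p ∈ subsetSeq δ (fun m => w (m + n)) {q} k,
      ¬ CanAccept δ F δF (w (k + n)) p := by
  by_contra h
  simp only [not_eventually, not_forall, not_not, exists_prop] at h
  obtain ⟨π', rfl, hπ', hacc⟩ := exists_buchiAccT_of_frequently_canAccept hclosed hdet hq h
  obtain ⟨π, hπI, hπ, hππ'⟩ := exists_isTrace_of_mem_subsetSeq hqI hπ'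
  have hπ'π : (fun m => π (m + n)) = π' := funext hππ'
  exact hw ⟨π, hπI, hπ, buchiAccT_of_shift (hπ'π ▸ hacc)⟩

theorem exists_safe_subsetSeq [Finite Q] (hclosed : ∀ q ∈ Q2, ∀ a, δ q a ⊆ Q2)
    (hdet : ∀ q ∈ Q2, ∀ a, (δ q a).Subsingleton) (hw : ¬ BuchiLang δ I F δF w) {n : ℕ}
    {X : Set Q} (hX : X ⊆ Q2) (hXI : X ⊆ subsetSeq δ w I n) :
    ∃ k, ∀ p ∈ subsetSeq δ (fun m => w (m + n)) X k, Safe δ F δF w (n + k) p := by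
  have hev : ∀ᶠ k in atTop, ∀ q ∈ X, ∀ p ∈ subsetSeq δ (fun m => w (m + n)) {q} k,
      ¬ CanAccept δ F δF (w (k + n)) p :=
    (eventually_all_finite X.toFinite).2 fun q hq =>
      eventually_not_canAccept_of_mem_subsetSeq hclosed hdet hw (hX hq) (hXI hq)
  obtain ⟨k, hk⟩ := eventually_atTop.1 hev
  refine ⟨k, fun p hp j r hr => ?_⟩
  have hr' : r ∈ subsetSeq δ (fun m => w (m + n)) X (k + j) := by
    rw [subsetSeq_shift_add]
    exact subsetSeq_mono (singleton_subset_iff.2 hp) j hr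
  obtain ⟨q, hq, hrq⟩ := mem_subsetSeq_iff.1 hr'
  simpa only [show k + j + n = j + (n + k) by omega] using hk (k + j) (by omega) q hq r hrq

end Safety

section WitnessRun

variable (δ : Q → A → Set Q) (Q1 Q2 : Set Q)

/-- The deterministic successor `γ₁` of the paper. -/
noncomputable def detSucc (m : Macro Q) (a : A) : Macro Q :=
  let N' := stepSet δ m.1 a ∩ Q1
  let S' := stepSet δ m.2.2.1 a
  let C' := ((stepSet δ m.1 a ∩ Q2) ∪ stepSet δ m.2.1 a) \ S'
  let B' := if m.2.2.2 = ∅ then C' else stepSet δ m.2.2.2 a ∩ C'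
  (N', C', S', B')

/-- The `B`-flushing successor `γ₂` of the paper. -/
noncomputable def flushSucc (m : Macro Q) (a : A) : Macro Q :=
  let g := detSucc δ Q1 Q2 m a
  (g.1, g.2.1 \ (g.2.2.1 ∪ g.2.2.2), g.2.2.1 ∪ g.2.2.2, ∅)

noncomputable def witnessRun (I F : Set Q) (δF : Set (Q × A × Q)) (w : ℕ → A) : ℕ → Macro Q
  | 0 => (Q1 ∩ I, Q2 ∩ I, ∅, Q2 ∩ I)
  | i + 1 =>
    let m := witnessRun I F δF w i
    if ∀ q ∈ (detSucc δ Q1 Q2 m (w i)).2.2.2, Safe δ F δF w (i + 1) q then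
      flushSucc δ Q1 Q2 m (w i)
    else detSucc δ Q1 Q2 m (w i)

structure WitnessInv (I F : Set Q) (δF : Set (Q × A × Q)) (w : ℕ → A) (i : ℕ) (m : Macro Q) :
    Prop where
  state : NcsbState Q1 Q2 F m
  fst_subset : m.1 ⊆ subsetSeq δ w I i
  snd_subset : m.2.1 ⊆ subsetSeq δ w I i
  safe : ∀ q ∈ m.2.2.1, Safe δ F δF w i q

variable {δ Q1 Q2} {I F : Set Q} {δF : Set (Q × A × Q)} {w : ℕ → A}

theorem witnessRun_succ (i : ℕ) : witnessRun δ Q1 Q2 I F δF w (i + 1) =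
    if ∀ q ∈ (detSucc δ Q1 Q2 (witnessRun δ Q1 Q2 I F δF w i) (w i)).2.2.2,
        Safe δ F δF w (i + 1) q then
      flushSucc δ Q1 Q2 (witnessRun δ Q1 Q2 I F δF w i) (w i)
    else detSucc δ Q1 Q2 (witnessRun δ Q1 Q2 I F δF w i) (w i) :=
  rfl

theorem detSucc_B_subset {m : Macro Q} {a : A} (hB : m.2.2.2.Nonempty) :
    (detSucc δ Q1 Q2 m a).2.2.2 ⊆ stepSet δ m.2.2.2 a := by
  simp only [detSucc, if_neg hB.ne_empty]
  exact inter_subset_left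

theorem ncsbSucc_detSucc {m : Macro Q} {a : A} (hS : ¬ ∃ p ∈ m.2.2.1, ∃ q ∈ δ p a, (p, a, q) ∈ δF) :
    NcsbSucc δ Q1 Q2 F δF m a (detSucc δ Q1 Q2 m a) :=
  ⟨hS, Or.inl rfl⟩

theorem ncsbSucc_flushSucc {m : Macro Q} {a : A}
    (hS : ¬ ∃ p ∈ m.2.2.1, ∃ q ∈ δ p a, (p, a, q) ∈ δF)
    (hB : (detSucc δ Q1 Q2 m a).2.2.2 ∩ F = ∅) :
    NcsbSucc δ Q1 Q2 F δF m a (flushSucc δ Q1 Q2 m a) :=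
  ⟨hS, Or.inr ⟨hB, rfl⟩⟩

theorem WitnessInv.step (hclosed : ∀ q ∈ Q2, ∀ a, δ q a ⊆ Q2) {i : ℕ} {m : Macro Q}
    (h : WitnessInv δ Q1 Q2 I F δF w i m) :
    WitnessInv δ Q1 Q2 I F δF w (i + 1) (detSucc δ Q1 Q2 m (w i)) := by
  obtain ⟨⟨-, hC, hS, -⟩, hN, hCI, hsafe⟩ := h
  have hsafe' : ∀ p ∈ stepSet δ m.2.2.1 (w i), Safe δ F δF w (i + 1) p := fun p hp =>
    let ⟨q, hq, hpq⟩ := mem_stepSet.1 hp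
    (hsafe q hq).step hpq
  refine ⟨⟨inter_subset_right, ?_, fun p hp => ⟨?_, (hsafe' p hp).notMem⟩, ?_⟩, ?_, ?_, hsafe'⟩
  · exact sdiff_subset.trans
      (union_subset inter_subset_right (stepSet_subset_of_closed hclosed hC _))
  · exact stepSet_subset_of_closed hclosed (hS.trans sdiff_subset) _ hp
  · simp only [detSucc]
    split_ifs
    exacts [subset_rfl, inter_subset_right]
  · exact inter_subset_left.trans (stepSet_mono hN _)
  · exact sdiff_subset.trans (union_subset (inter_subset_left.trans (stepSet_mono hN _))
      (stepSet_mono hCI _))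

theorem WitnessInv.flush {i : ℕ} {m : Macro Q}
    (h : WitnessInv δ Q1 Q2 I F δF w (i + 1) (detSucc δ Q1 Q2 m (w i)))
    (hB : ∀ q ∈ (detSucc δ Q1 Q2 m (w i)).2.2.2, Safe δ F δF w (i + 1) q) :
    WitnessInv δ Q1 Q2 I F δF w (i + 1) (flushSucc δ Q1 Q2 m (w i)) := by
  obtain ⟨⟨hN, hC, hS, hBC⟩, hNI, hCI, hsafe⟩ := h
  refine ⟨⟨hN, sdiff_subset.trans hC, union_subset hS fun p hp => ⟨hC (hBC hp), (hB p hp).notMem⟩,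
    empty_subset _⟩, hNI, sdiff_subset.trans hCI, ?_⟩
  rintro p (hp | hp)
  exacts [hsafe p hp, hB p hp]

theorem witnessRun_inv (hclosed : ∀ q ∈ Q2, ∀ a, δ q a ⊆ Q2) :
    ∀ i, WitnessInv δ Q1 Q2 I F δF w i (witnessRun δ Q1 Q2 I F δF w i)
  | 0 => ⟨⟨inter_subset_left, inter_subset_left, empty_subset _, subset_rfl⟩,
      inter_subset_right, inter_subset_right, fun _ h => h.elim⟩
  | i + 1 => by
    have h := (witnessRun_inv hclosed i).step hclosed
    rw [witnessRun_succ]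
    split_ifs with hB
    exacts [h.flush hB, h]

theorem witnessRun_isRun (hclosed : ∀ q ∈ Q2, ∀ a, δ q a ⊆ Q2) :
    NcsbRun δ Q1 Q2 I F δF w (witnessRun δ Q1 Q2 I F δF w) := by
  refine ⟨rfl, fun i => (witnessRun_inv hclosed i).state, fun i => ?_⟩
  have hS : ¬ ∃ p ∈ (witnessRun δ Q1 Q2 I F δF w i).2.2.1, ∃ q ∈ δ p (w i), (p, w i, q) ∈ δF :=
    fun ⟨p, hp, _, hq, hpq⟩ => ((witnessRun_inv hclosed i).safe p hp).notMem_δF hq hpq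
  rw [witnessRun_succ]
  split_ifs with hB
  · exact ncsbSucc_flushSucc hS (eq_empty_iff_forall_notMem.2 fun p hp => (hB p hp.1).notMem hp.2)
  · exact ncsbSucc_detSucc hS

theorem witnessRun_succ_B_subset {i : ℕ} (hB : (witnessRun δ Q1 Q2 I F δF w i).2.2.2.Nonempty) :
    (witnessRun δ Q1 Q2 I F δF w (i + 1)).2.2.2 ⊆
      stepSet δ (witnessRun δ Q1 Q2 I F δF w i).2.2.2 (w i) := by
  rw [witnessRun_succ]
  split_ifs
  exacts [empty_subset _, detSucc_B_subset hB]

theorem witnessRun_B_add_subset {n : ℕ}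
    (hB : ∀ i ≥ n, (witnessRun δ Q1 Q2 I F δF w i).2.2.2.Nonempty) :
    ∀ j, (witnessRun δ Q1 Q2 I F δF w (n + j)).2.2.2 ⊆
      subsetSeq δ (fun m => w (m + n)) (witnessRun δ Q1 Q2 I F δF w n).2.2.2 j
  | 0 => subset_rfl
  | j + 1 => by
    refine (witnessRun_succ_B_subset (hB (n + j) (Nat.le_add_right n j))).trans ?_
    rw [subsetSeq_succ, Nat.add_comm n j]
    exact stepSet_mono (Nat.add_comm n j ▸ witnessRun_B_add_subset hB j) _

theorem witnessRun_acc [Finite Q] (hclosed : ∀ q ∈ Q2, ∀ a, δ q a ⊆ Q2)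
    (hdet : ∀ q ∈ Q2, ∀ a, (δ q a).Subsingleton) (hw : ¬ BuchiLang δ I F δF w) :
    NcsbAcc (witnessRun δ Q1 Q2 I F δF w) := by
  intro n
  by_contra! hB
  have hinv : WitnessInv δ Q1 Q2 I F δF w n _ := witnessRun_inv hclosed n
  obtain ⟨k, hk⟩ := exists_safe_subsetSeq hclosed hdet hw
    (hinv.state.2.2.2.trans hinv.state.2.1) (hinv.state.2.2.2.trans hinv.snd_subset)
  have hflush : ∀ q ∈ (detSucc δ Q1 Q2 (witnessRun δ Q1 Q2 I F δF w (n + k)) (w (n + k))).2.2.2,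
      Safe δ F δF w (n + k + 1) q := fun q hq =>
    let ⟨p, hp, hpq⟩ := mem_stepSet.1 (detSucc_B_subset (hB (n + k) (by omega)) hq)
    (hk p (witnessRun_B_add_subset hB k hp)).step hpq
  exact (hB (n + k + 1) (by omega)).ne_empty (by rw [witnessRun_succ, if_pos hflush]; rfl)

end WitnessRun

theorem ncsb_maxrank_complete_general [Finite Q]
    (δ : Q → A → Set Q) (Q1 Q2 I F : Set Q) (δF : Set (Q × A × Q))
    (hclosed : ∀ q ∈ Q2, ∀ a, δ q a ⊆ Q2)
    (hdet : ∀ q ∈ Q2, ∀ a, (δ q a).Subsingleton)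
    (w : ℕ → A) (hw : ¬ BuchiLang δ I F δF w) :
    ∃ R : ℕ → Macro Q, NcsbRun δ Q1 Q2 I F δF w R ∧ NcsbAcc R :=
  ⟨witnessRun δ Q1 Q2 I F δF w, witnessRun_isRun hclosed, witnessRun_acc hclosed hdet hw⟩

/-- Completeness of NCSB-MaxRank: if `α ∉ L(A)`, then `NCSB-MaxRank(A)` has an
infinite run on `α` visiting macrostates with empty `B`-component infinitely often. -/
theorem ncsb_maxrank_complete [Finite Q]
    (δ : Q → A → Set Q) (Q1 Q2 I F : Set Q) (δF : Set (Q × A × Q))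
    (hpart : Q1 = Q2ᶜ)
    (hclosed : ∀ q ∈ Q2, ∀ a, δ q a ⊆ Q2)
    (hdet : ∀ q ∈ Q2, ∀ a, (δ q a).Subsingleton)
    (hF : F ⊆ Q2)
    (hδF : ∀ p a q, (p, a, q) ∈ δF → q ∈ δ p a ∧ q ∈ Q2)
    (w : ℕ → A) (hw : ¬ BuchiLang δ I F δF w) :
    ∃ R : ℕ → Macro Q, NcsbRun δ Q1 Q2 I F δF w R ∧ NcsbAcc R :=
  ncsb_maxrank_complete_general δ Q1 Q2 I F δF hclosed hdet w hw
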